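/- arXiv:1802.00533 — 4 statements merged into one kernel-verified Lean document; each statement's English description precedes it below -/
import Mathlib

section
/- Let y₁ > 0 > y₂ be real numbers and let x > 0. Then the three points (x, 0), (0, y₁), (0, y₂) in ℝ² are affinely independent, and the circumradius of the triangle they span equals √((x² + y₁²)(x² + y₂²)) / (2x). -/
noncomputable def planePt (a b : ℝ) : EuclideanSpace ℝ (Fin 2) :=
  (WithLp.equiv 2 (Fin 2 → ℝ)).symm ![a, b]

lemma planePt_apply_zero (a b : ℝ) : planePt a b 0 = a := rfl

lemma planePt_apply_one (a b : ℝ) : planePt a b 1 = b := rfl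

lemma planePt_right_injective (a : ℝ) : Function.Injective (planePt a) :=
  fun b d h => by simpa only [planePt_apply_one] using congrArg (· 1) h

lemma dist_planePt (a b c d : ℝ) :
    dist (planePt a b) (planePt c d) = Real.sqrt ((a - c) ^ 2 + (b - d) ^ 2) := by
  rw [EuclideanSpace.dist_eq, Fin.sum_univ_two, planePt_apply_zero, planePt_apply_zero,
    planePt_apply_one, planePt_apply_one, Real.dist_eq, Real.dist_eq, sq_abs, sq_abs]

lemma dist_planePt_eq_sqrt_div {a b c d N D : ℝ} (hD : 0 < D)
    (h : (a - c) ^ 2 + (b - d) ^ 2 = N / D ^ 2) :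
    dist (planePt a b) (planePt c d) = Real.sqrt N / D := by
  rw [dist_planePt, h, Real.sqrt_div' _ (sq_nonneg D), Real.sqrt_sq hD.le]

noncomputable def yAxis : AffineSubspace ℝ (EuclideanSpace ℝ (Fin 2)) :=
  (LinearMap.ker (EuclideanSpace.proj (0 : Fin 2)).toLinearMap).toAffineSubspace

lemma planePt_mem_yAxis_iff (a b : ℝ) : planePt a b ∈ yAxis ↔ a = 0 :=
  Iff.rfl

lemma affineIndependent_planePt_of_ne {x y₁ y₂ : ℝ} (hx : x ≠ 0) (hy : y₁ ≠ y₂) :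
    AffineIndependent ℝ ![planePt x 0, planePt 0 y₁, planePt 0 y₂] :=
  affineIndependent_of_ne_of_notMem_of_mem_of_mem ((planePt_right_injective 0).ne hy)
    ((planePt_mem_yAxis_iff x 0).not.2 hx) ((planePt_mem_yAxis_iff 0 y₁).2 rfl)
    ((planePt_mem_yAxis_iff 0 y₂).2 rfl)

/-- The centre lies on the perpendicular bisector `y = (y₁ + y₂) / 2` of the two points on the
vertical axis, and its abscissa is fixed by equating the distances to `(x, 0)` and `(0, y₁)`. -/
lemma dist_triangle_vertex_center {x : ℝ} (hx : 0 < x) (y₁ y₂ : ℝ) (i : Fin 3) :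
    dist (![planePt x 0, planePt 0 y₁, planePt 0 y₂] i)
        (planePt ((x ^ 2 + y₁ * y₂) / (2 * x)) ((y₁ + y₂) / 2)) =
      Real.sqrt ((x ^ 2 + y₁ ^ 2) * (x ^ 2 + y₂ ^ 2)) / (2 * x) := by
  fin_cases i <;>
  · refine dist_planePt_eq_sqrt_div (by positivity) ?_
    field_simp
    ring

/-- If `y₁ > 0 > y₂` and `x > 0`, then the points `(x,0)`, `(0,y₁)`, `(0,y₂)`
are affinely independent, and the circumradius of the triangle they span equals
`√((x² + y₁²)(x² + y₂²)) / (2x)`. -/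
theorem stmt4 (x y₁ y₂ : ℝ) (hy₁ : 0 < y₁) (hy₂ : y₂ < 0) (hx : 0 < x) :
    AffineIndependent ℝ ![planePt x 0, planePt 0 y₁, planePt 0 y₂] ∧
    ∀ S : Affine.Simplex ℝ (EuclideanSpace ℝ (Fin 2)) 2,
      S.points = ![planePt x 0, planePt 0 y₁, planePt 0 y₂] →
      S.circumradius =
        Real.sqrt ((x ^ 2 + y₁ ^ 2) * (x ^ 2 + y₂ ^ 2)) / (2 * x) := by
  refine ⟨affineIndependent_planePt_of_ne hx.ne' (hy₂.trans hy₁).ne', fun S hS => ?_⟩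
  have hcenter : planePt ((x ^ 2 + y₁ * y₂) / (2 * x)) ((y₁ + y₂) / 2) ∈
      affineSpan ℝ (Set.range S.points) := by
    rw [S.span_eq_top finrank_euclideanSpace_fin]
    exact AffineSubspace.mem_top _ _ _
  refine (S.eq_circumradius_of_dist_eq hcenter fun i => ?_).symm
  rw [hS]
  exact dist_triangle_vertex_center hx y₁ y₂ i
end

section
/- Let y, z₁, z₂ be points of the Euclidean space ℝ^m satisfying 0 < ‖z₁ − y‖ < ‖z₂ − y‖ < ‖z₁ − z₂‖, and let ε > 0. Define ẑᵢ = y + 2ε · (zᵢ − y)/‖zᵢ − y‖ for i = 1, 2. Then ‖ẑ₁ − ẑ₂‖ > 2ε; equivalently, the closed balls of radius ε centered at ẑ₁ and ẑ₂ are disjoint, while each is tangent to the closed ball of radius ε centered at y. -/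
open scoped RealInnerProductSpace


/-- Let `y, z₁, z₂ ∈ ℝ^m` with `0 < ‖z₁ − y‖ < ‖z₂ − y‖ < ‖z₁ − z₂‖`, let
`ε > 0`, and let `ẑᵢ = y + 2ε·(zᵢ − y)/‖zᵢ − y‖`.  Then `‖ẑ₁ − ẑ₂‖ > 2ε`; equivalently the
closed `ε`-balls about `ẑ₁` and `ẑ₂` are disjoint, while each is tangent to the closed
`ε`-ball about `y` (i.e. `dist ẑᵢ y = 2ε`). -/
theorem stmt13 (m : ℕ) (y z₁ z₂ : EuclideanSpace ℝ (Fin m))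
    (h₀ : 0 < ‖z₁ - y‖) (h₁ : ‖z₁ - y‖ < ‖z₂ - y‖) (h₂ : ‖z₂ - y‖ < ‖z₁ - z₂‖)
    (ε : ℝ) (hε : 0 < ε)
    (w₁ w₂ : EuclideanSpace ℝ (Fin m))
    (hw₁ : w₁ = y + (2 * ε / ‖z₁ - y‖) • (z₁ - y))
    (hw₂ : w₂ = y + (2 * ε / ‖z₂ - y‖) • (z₂ - y)) :
    2 * ε < ‖w₁ - w₂‖ ∧
    Disjoint (Metric.closedBall w₁ ε) (Metric.closedBall w₂ ε) ∧
    dist w₁ y = 2 * ε ∧ dist w₂ y = 2 * ε := by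
  set a := z₁ - y with ha
  set b := z₂ - y with hb
  have hb0 : 0 < ‖b‖ := lt_trans h₀ h₁
  set s := 2 * ε / ‖a‖ with hs
  set t := 2 * ε / ‖b‖ with ht
  have hs0 : 0 < s := div_pos (by linarith) h₀
  have ht0 : 0 < t := div_pos (by linarith) hb0
  have hsa : s * ‖a‖ = 2 * ε := div_mul_cancel₀ _ h₀.ne'
  have htb : t * ‖b‖ = 2 * ε := div_mul_cancel₀ _ hb0.ne'
  -- inner product bound
  have hab : z₁ - z₂ = a - b := by rw [ha, hb]; abel
  have hinner : 2 * ⟪a, b⟫ < ‖a‖ ^ 2 := by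
    have := h₂
    rw [hab] at this
    have h2 : ‖b‖ ^ 2 < ‖a - b‖ ^ 2 :=
      pow_lt_pow_left₀ this (norm_nonneg _) (by norm_num)
    have h3 : ‖a - b‖ ^ 2 = ‖a‖ ^ 2 - 2 * ⟪a, b⟫ + ‖b‖ ^ 2 := norm_sub_sq_real a b
    linarith
  have hkey : s * t * ⟪a, b⟫ < 2 * ε ^ 2 := by
    rcases le_or_gt ⟪a, b⟫ 0 with h | h
    · have : s * t * ⟪a, b⟫ ≤ 0 := mul_nonpos_of_nonneg_of_nonpos (le_of_lt (mul_pos hs0 ht0)) h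
      nlinarith
    · have h3 : s * t * ⟪a, b⟫ < s * t * (‖a‖ ^ 2 / 2) := by
        apply mul_lt_mul_of_pos_left _ (mul_pos hs0 ht0)
        linarith
      have h4 : s * t * (‖a‖ ^ 2 / 2) = (2 * ε) * (t * ‖a‖) / 2 := by
        rw [← hsa]; ring
      have h5 : t * ‖a‖ < 2 * ε := by
        calc t * ‖a‖ < t * ‖b‖ := by exact mul_lt_mul_of_pos_left h₁ ht0
          _ = 2 * ε := htb
      calc s * t * ⟪a, b⟫ < (2 * ε) * (t * ‖a‖) / 2 := by rw [← h4]; exact h3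
        _ < 2 * ε ^ 2 := by nlinarith
  have hw : w₁ - w₂ = s • a - t • b := by rw [hw₁, hw₂]; abel
  have hnsq : ‖w₁ - w₂‖ ^ 2 = (2 * ε) ^ 2 + (2 * ε) ^ 2 - 2 * (s * t * ⟪a, b⟫) := by
    rw [hw, norm_sub_sq_real, norm_smul, norm_smul, real_inner_smul_left,
      real_inner_smul_right, Real.norm_of_nonneg hs0.le, Real.norm_of_nonneg ht0.le,
      mul_pow, mul_pow]
    have e1 : s ^ 2 * ‖a‖ ^ 2 = (2 * ε) ^ 2 := by rw [← hsa]; ring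
    have e2 : t ^ 2 * ‖b‖ ^ 2 = (2 * ε) ^ 2 := by rw [← htb]; ring
    linear_combination e1 + e2
  have hmain : 2 * ε < ‖w₁ - w₂‖ := by
    have h6 : (2 * ε) ^ 2 < ‖w₁ - w₂‖ ^ 2 := by rw [hnsq]; nlinarith
    exact lt_of_pow_lt_pow_left₀ 2 (norm_nonneg _) h6
  have hd1 : dist w₁ y = 2 * ε := by
    rw [hw₁, dist_eq_norm]
    simp only [add_sub_cancel_left, norm_smul, Real.norm_of_nonneg hs0.le]
    exact hsa
  have hd2 : dist w₂ y = 2 * ε := by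
    rw [hw₂, dist_eq_norm]
    simp only [add_sub_cancel_left, norm_smul, Real.norm_of_nonneg ht0.le]
    exact htb
  refine ⟨hmain, ?_, hd1, hd2⟩
  apply Metric.closedBall_disjoint_closedBall
  rw [dist_eq_norm]
  linarith
end

section
/- Let N and t be positive integers and let X be a subset of {1, …, N} × {1, …, N} with |X| > 4Nt. Then there exists (a, b) ∈ X such that X contains at least t points of the form (a′, b) with a′ < a, at least t points of the form (a′, b) with a′ > a, at least t points of the form (a, b′) with b′ < b, and at least t points of the form (a, b′) with b′ > b. -/
/-! Call a point of `X` bad in one of the four directions if fewer than `t` points of `X` lie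
beyond it in that direction on its row or column. On a single line, the points with fewer than
`t` predecessors are among the first `t` points, so each direction has at most `N * t` bad
points. As `|X| > 4Nt`, some point is bad in no direction. -/

open Finset OrderDual

section Rank

variable {α β : Type*} [LinearOrder α]

lemma card_filter_lt_lt_card_filter_lt (s : Finset β) (g : β → α) {x y : β} (hx : x ∈ s)
    (hxy : g x < g y) : #{z ∈ s | g z < g x} < #{z ∈ s | g z < g y} := by
  refine card_lt_card ((ssubset_iff_of_subset ?_).2 ⟨x, ?_, ?_⟩)
  · intro z hz
    simp only [mem_filter] at hz ⊢
    exact ⟨hz.1, hz.2.trans hxy⟩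
  · exact mem_filter.2 ⟨hx, hxy⟩
  · simp

lemma card_filter_card_filter_lt_lt_le (s : Finset β) (g : β → α) (hg : Set.InjOn g s)
    (t : ℕ) : #{x ∈ s | #{y ∈ s | g y < g x} < t} ≤ t := by
  have hinj : Set.InjOn (fun x => #{y ∈ s | g y < g x}) s := by
    intro x hx y hy hxy
    by_contra hne
    rcases lt_or_gt_of_ne fun h => hne (hg hx hy h) with h | h
    · exact (card_filter_lt_lt_card_filter_lt s g hx h).ne hxy
    · exact (card_filter_lt_lt_card_filter_lt s g hy h).ne hxy.symm
  simpa using card_le_card_of_injOn (t := range t) (fun x => #{y ∈ s | g y < g x})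
    (fun x hx => by simpa using (mem_filter.1 hx).2)
    (hinj.mono fun x hx => (mem_filter.1 hx).1)

lemma card_filter_card_filter_fiber_lt_lt_le {ι : Type*} [DecidableEq ι] (X : Finset β)
    (f : β → ι) (S : Finset ι) (hf : ∀ p ∈ X, f p ∈ S) (g : β → α)
    (hfg : ∀ p ∈ X, ∀ q ∈ X, f p = f q → g p = g q → p = q) (t : ℕ) :
    #{p ∈ X | #{q ∈ X | f q = f p ∧ g q < g p} < t} ≤ #S * t := by
  rw [card_eq_sum_card_fiberwise fun p hp => hf p (mem_filter.1 hp).1, ← smul_eq_mul,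
    ← sum_const]
  refine sum_le_sum fun i _ => le_trans (card_le_card ?_)
    (card_filter_card_filter_lt_lt_le {p ∈ X | f p = i} g ?_ t)
  · intro p hp
    simp only [mem_filter] at hp ⊢
    obtain ⟨⟨hpX, hlt⟩, rfl⟩ := hp
    refine ⟨⟨hpX, rfl⟩, lt_of_le_of_lt (card_le_card fun q hq => ?_) hlt⟩
    simp only [mem_filter] at hq ⊢
    exact ⟨hq.1.1, hq.1.2, hq.2⟩
  · intro p hp q hq hpq
    simp only [coe_filter, Set.mem_ofPred_eq] at hp hq
    exact hfg p hp.1 q hq.1 (hp.2.trans hq.2.symm) hpq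

end Rank

theorem stmt15_general (N t : ℕ) (X : Finset (ℕ × ℕ))
    (hX : ∀ p ∈ X, p.1 ∈ Finset.Icc 1 N ∧ p.2 ∈ Finset.Icc 1 N)
    (hcard : 4 * N * t < X.card) :
    ∃ p ∈ X,
      t ≤ (X.filter (fun q => q.2 = p.2 ∧ q.1 < p.1)).card ∧
      t ≤ (X.filter (fun q => q.2 = p.2 ∧ p.1 < q.1)).card ∧
      t ≤ (X.filter (fun q => q.1 = p.1 ∧ q.2 < p.2)).card ∧
      t ≤ (X.filter (fun q => q.1 = p.1 ∧ p.2 < q.2)).card := by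
  by_contra! hnone
  have hrow : ∀ p ∈ X, ∀ q ∈ X, p.2 = q.2 → p.1 = q.1 → p = q :=
    fun p _ q _ h2 h1 => Prod.ext h1 h2
  have hcol : ∀ p ∈ X, ∀ q ∈ X, p.1 = q.1 → p.2 = q.2 → p = q :=
    fun p _ q _ h1 h2 => Prod.ext h1 h2
  have hleft := card_filter_card_filter_fiber_lt_lt_le X Prod.snd _ (fun p hp => (hX p hp).2)
    Prod.fst hrow t
  -- ordering the lines by `toDual` counts the points after `p` instead of before it
  have hright := card_filter_card_filter_fiber_lt_lt_le X Prod.snd _ (fun p hp => (hX p hp).2)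
    (fun p => toDual p.1) hrow t
  have hbelow := card_filter_card_filter_fiber_lt_lt_le X Prod.fst _ (fun p hp => (hX p hp).1)
    Prod.snd hcol t
  have habove := card_filter_card_filter_fiber_lt_lt_le X Prod.fst _ (fun p hp => (hX p hp).1)
    (fun p => toDual p.2) hcol t
  simp only [toDual_lt_toDual, Nat.card_Icc, add_tsub_cancel_right] at hleft hright hbelow habove
  have hcover : X ⊆ {p ∈ X | #{q ∈ X | q.2 = p.2 ∧ q.1 < p.1} < t} ∪
      {p ∈ X | #{q ∈ X | q.2 = p.2 ∧ p.1 < q.1} < t} ∪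
      {p ∈ X | #{q ∈ X | q.1 = p.1 ∧ q.2 < p.2} < t} ∪
      {p ∈ X | #{q ∈ X | q.1 = p.1 ∧ p.2 < q.2} < t} := by
    intro p hp
    have hbad := hnone p hp
    simp only [mem_union, mem_filter, hp, true_and]
    omega
  have hunion := (card_le_card hcover).trans <| (card_union_le _ _).trans <| Nat.add_le_add_right
    ((card_union_le _ _).trans <| Nat.add_le_add_right (card_union_le _ _) _) _
  rw [mul_assoc] at hcard
  omega

/-- If `N, t ≥ 1` and `X ⊆ {1,…,N} × {1,…,N}` has `|X| > 4Nt`, then some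
point `(a, b) ∈ X` has at least `t` points of `X` strictly to its left in the same row, at
least `t` strictly to its right in the same row, at least `t` strictly below it in the same
column, and at least `t` strictly above it in the same column. -/
theorem stmt15 (N t : ℕ) (hN : 0 < N) (ht : 0 < t) (X : Finset (ℕ × ℕ))
    (hX : ∀ p ∈ X, p.1 ∈ Finset.Icc 1 N ∧ p.2 ∈ Finset.Icc 1 N)
    (hcard : 4 * N * t < X.card) :
    ∃ p ∈ X,
      t ≤ (X.filter (fun q => q.2 = p.2 ∧ q.1 < p.1)).card ∧
      t ≤ (X.filter (fun q => q.2 = p.2 ∧ p.1 < q.1)).card ∧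
      t ≤ (X.filter (fun q => q.1 = p.1 ∧ q.2 < p.2)).card ∧
      t ≤ (X.filter (fun q => q.1 = p.1 ∧ p.2 < q.2)).card :=
  stmt15_general N t X hX hcard
end

section
/- Let S be a finite set, f : S → I a function into a set I, and M a positive integer such that every fiber f⁻¹(i) has at most M elements. Let P be the number of i ∈ I with f⁻¹(i) nonempty, and let t be a real number with 0 ≤ t < M. Then the number of i ∈ I with |f⁻¹(i)| > t is at least (|S| − P·t)/(M − t). -/
/-- Let `S` be a finite set, `f : S → I`, and `M ≥ 1` with every fiber
`f⁻¹(i)` of size at most `M`.  If `P` is the number of `i ∈ I` with nonempty fiber and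
`0 ≤ t < M` is real, then the number of `i ∈ I` with `|f⁻¹(i)| > t` is at least
`(|S| − P·t)/(M − t)`. -/
theorem stmt16 {α I : Type*} [DecidableEq I] (S : Finset α) (f : α → I)
    (M : ℕ) (hM : 0 < M)
    (hfib : ∀ i : I, (S.filter (fun s => f s = i)).card ≤ M)
    (t : ℝ) (ht0 : 0 ≤ t) (htM : t < M) :
    ((S.card : ℝ) - (S.image f).card * t) / ((M : ℝ) - t) ≤
      (((S.image f).filter
        (fun i => t < ((S.filter (fun s => f s = i)).card : ℝ))).card : ℝ) := by
  classical
  set c : I → ℝ := fun i => ((S.filter (fun s => f s = i)).card : ℝ) with hc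
  have hMt : (0:ℝ) < (M:ℝ) - t := by linarith
  rw [div_le_iff₀ hMt]
  have hsum : (S.card : ℝ) = ∑ i ∈ S.image f, c i := by
    rw [Finset.card_eq_sum_card_image f S]
    push_cast
    rfl
  have hsplit := Finset.sum_filter_add_sum_filter_not (S.image f) (fun i => t < c i) c
  have hcard := Finset.card_filter_add_card_filter_not
    (s := S.image f) (p := fun i => t < c i)
  have h1 : ∑ i ∈ (S.image f).filter (fun i => t < c i), c i ≤
      (((S.image f).filter (fun i => t < c i)).card : ℝ) * M := by
    calc ∑ i ∈ (S.image f).filter (fun i => t < c i), c i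
        ≤ ∑ i ∈ (S.image f).filter (fun i => t < c i), (M:ℝ) := by
          apply Finset.sum_le_sum
          intro i _
          simp only [hc]
          exact_mod_cast hfib i
      _ = _ := by rw [Finset.sum_const, nsmul_eq_mul]
  have h2 : ∑ i ∈ (S.image f).filter (fun i => ¬ t < c i), c i ≤
      (((S.image f).filter (fun i => ¬ t < c i)).card : ℝ) * t := by
    calc ∑ i ∈ (S.image f).filter (fun i => ¬ t < c i), c i
        ≤ ∑ i ∈ (S.image f).filter (fun i => ¬ t < c i), t := by
          apply Finset.sum_le_sum
          intro i hi
          exact le_of_not_gt (Finset.mem_filter.mp hi).2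
      _ = _ := by rw [Finset.sum_const, nsmul_eq_mul]
  have hcardR : (((S.image f).filter (fun i => t < c i)).card : ℝ) +
      (((S.image f).filter (fun i => ¬ t < c i)).card : ℝ) = ((S.image f).card : ℝ) := by
    exact_mod_cast hcard
  nlinarith [hsum, hsplit, h1, h2, hcardR]
end
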